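/- Let A be a unital Poisson algebra over k (with unit 1 for the associative product *) such that {x, 1} = 0 for all x ∈ A. Define W(x⊗y) = {x,y}⊗1 + x⊗y, X(x⊗y) = 1⊗{x,y} + x⊗y, Z(x⊗y) = 1⊗(x*y) + (x*y)⊗1 − y⊗x. Then (W, X, Z) is a WXZ-system: [W,W,W] = 0, [Z,Z,Z] = 0, [W,X,X] = 0, [X,X,Z] = 0. -/

import Mathlib

open TensorProduct LinearMap

noncomputable section

variable {k : Type*} [Field k]

/-- `R ⊗ I` acting on the first two factors of `V ⊗ (V ⊗ V)`. -/
def leg12 {V : Type*} [AddCommGroup V] [Module k V]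
    (R : V ⊗[k] V →ₗ[k] V ⊗[k] V) :
    V ⊗[k] (V ⊗[k] V) →ₗ[k] V ⊗[k] (V ⊗[k] V) :=
  (TensorProduct.assoc k V V V).toLinearMap ∘ₗ R.rTensor V ∘ₗ
    (TensorProduct.assoc k V V V).symm.toLinearMap

/-- `I ⊗ R` acting on the last two factors. -/
def leg23 {V : Type*} [AddCommGroup V] [Module k V]
    (R : V ⊗[k] V →ₗ[k] V ⊗[k] V) :
    V ⊗[k] (V ⊗[k] V) →ₗ[k] V ⊗[k] (V ⊗[k] V) :=
  R.lTensor V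

/-- `R¹³ = (I⊗τ)(R⊗I)(I⊗τ)`. -/
def leg13 {V : Type*} [AddCommGroup V] [Module k V]
    (R : V ⊗[k] V →ₗ[k] V ⊗[k] V) :
    V ⊗[k] (V ⊗[k] V) →ₗ[k] V ⊗[k] (V ⊗[k] V) :=
  ((TensorProduct.comm k V V).toLinearMap.lTensor V) ∘ₗ leg12 R ∘ₗ
    ((TensorProduct.comm k V V).toLinearMap.lTensor V)

/-- The constant Yang–Baxter commutator [R,S,T] = R¹²S¹³T²³ − T²³S¹³R¹². -/
def ybComm {V : Type*} [AddCommGroup V] [Module k V]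
    (R S T : V ⊗[k] V →ₗ[k] V ⊗[k] V) :
    V ⊗[k] (V ⊗[k] V) →ₗ[k] V ⊗[k] (V ⊗[k] V) :=
  leg12 R ∘ₗ leg13 S ∘ₗ leg23 T - leg23 T ∘ₗ leg13 S ∘ₗ leg12 R

/-! On a pure tensor `x ⊗ y ⊗ z` both sides of each Yang–Baxter commutator expand explicitly.
For `Z` only associativity of `*` is needed. For `W` and `X`, terms with `{1, -}` or `{-, 1}`
vanish, and the remaining double brackets cancel by the Jacobi identity in derivation form
`{x, {y, z}} = {{x, y}, z} + {y, {x, z}}`; for `(X, X, Z)` the Leibniz rule splits `{x, y * z}`. -/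

section Legs

variable {V : Type*} [AddCommGroup V] [Module k V] (R : V ⊗[k] V →ₗ[k] V ⊗[k] V)

lemma leg12_tmul (x y z : V) :
    leg12 R (x ⊗ₜ[k] (y ⊗ₜ[k] z)) = TensorProduct.assoc k V V V (R (x ⊗ₜ[k] y) ⊗ₜ[k] z) := rfl

lemma leg23_tmul (x y z : V) : leg23 R (x ⊗ₜ[k] (y ⊗ₜ[k] z)) = x ⊗ₜ[k] R (y ⊗ₜ[k] z) := rfl

lemma leg13_tmul (x y z : V) :
    leg13 R (x ⊗ₜ[k] (y ⊗ₜ[k] z)) = (TensorProduct.comm k V V).toLinearMap.lTensor V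
      (TensorProduct.assoc k V V V (R (x ⊗ₜ[k] z) ⊗ₜ[k] y)) := rfl

lemma ybComm_eq_zero_of_tmul (S T : V ⊗[k] V →ₗ[k] V ⊗[k] V)
    (h : ∀ x y z : V, leg12 R (leg13 S (leg23 T (x ⊗ₜ[k] (y ⊗ₜ[k] z)))) =
      leg23 T (leg13 S (leg12 R (x ⊗ₜ[k] (y ⊗ₜ[k] z))))) :
    ybComm R S T = 0 := by
  ext x y z
  simpa [ybComm, sub_eq_zero] using h x y z

end Legs

lemma ybComm_ZZZ_eq_zero {A : Type*} [Ring A] [Algebra k A] (Z : A ⊗[k] A →ₗ[k] A ⊗[k] A)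
    (hZ : ∀ x y : A, Z (x ⊗ₜ[k] y) =
      (1 : A) ⊗ₜ[k] (x * y) + (x * y) ⊗ₜ[k] (1 : A) - y ⊗ₜ[k] x) :
    ybComm Z Z Z = 0 := by
  refine ybComm_eq_zero_of_tmul _ _ _ fun x y z => ?_
  simp only [leg12_tmul, leg13_tmul, leg23_tmul, hZ, map_add, map_sub, tmul_add, tmul_sub,
    add_tmul, sub_tmul, assoc_tmul, lTensor_tmul, LinearEquiv.coe_coe, comm_tmul, one_mul, mul_one,
    mul_assoc]
  abel

section PoissonBracket

variable {A : Type*} [Ring A] [Algebra k A] {br : A →ₗ[k] A →ₗ[k] A}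

lemma br_one_left (hanti : ∀ x y : A, br x y = -br y x) (hone : ∀ x : A, br x 1 = 0) (z : A) :
    br 1 z = 0 := by
  rw [hanti, hone, neg_zero]

lemma br_br_eq_add (hanti : ∀ x y : A, br x y = -br y x)
    (hjacobi : ∀ x y t : A, br x (br y t) + br y (br t x) + br t (br x y) = 0) (x y z : A) :
    br x (br y z) = br (br x y) z + br y (br x z) := by
  have h := hjacobi x y z
  rw [hanti z x, map_neg, hanti z (br x y)] at h
  rw [← sub_eq_zero, ← h]
  abel

lemma ybComm_WWW_eq_zero (hanti : ∀ x y : A, br x y = -br y x)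
    (hjacobi : ∀ x y t : A, br x (br y t) + br y (br t x) + br t (br x y) = 0)
    (hone : ∀ x : A, br x 1 = 0) (W : A ⊗[k] A →ₗ[k] A ⊗[k] A)
    (hW : ∀ x y : A, W (x ⊗ₜ[k] y) = br x y ⊗ₜ[k] (1 : A) + x ⊗ₜ[k] y) :
    ybComm W W W = 0 := by
  refine ybComm_eq_zero_of_tmul _ _ _ fun x y z => ?_
  simp only [leg12_tmul, leg13_tmul, leg23_tmul, hW, map_add, tmul_add, add_tmul, assoc_tmul,
    lTensor_tmul, LinearEquiv.coe_coe, comm_tmul, hone, br_one_left hanti hone, zero_tmul, zero_add]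
  rw [br_br_eq_add hanti hjacobi, hanti y (br x z), add_tmul, neg_tmul]
  abel

lemma ybComm_WXX_eq_zero (hanti : ∀ x y : A, br x y = -br y x)
    (hjacobi : ∀ x y t : A, br x (br y t) + br y (br t x) + br t (br x y) = 0)
    (hone : ∀ x : A, br x 1 = 0) (W X : A ⊗[k] A →ₗ[k] A ⊗[k] A)
    (hW : ∀ x y : A, W (x ⊗ₜ[k] y) = br x y ⊗ₜ[k] (1 : A) + x ⊗ₜ[k] y)
    (hX : ∀ x y : A, X (x ⊗ₜ[k] y) = (1 : A) ⊗ₜ[k] br x y + x ⊗ₜ[k] y) :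
    ybComm W X X = 0 := by
  refine ybComm_eq_zero_of_tmul _ _ _ fun x y z => ?_
  simp only [leg12_tmul, leg13_tmul, leg23_tmul, hW, hX, map_add, tmul_add, add_tmul, assoc_tmul,
    lTensor_tmul, LinearEquiv.coe_coe, comm_tmul, hone, br_one_left hanti hone, zero_tmul,
    tmul_zero, zero_add]
  rw [br_br_eq_add hanti hjacobi, tmul_add, tmul_add]
  abel

lemma ybComm_XXZ_eq_zero (hanti : ∀ x y : A, br x y = -br y x)
    (hleibniz : ∀ x y t : A, br x (y * t) = br x y * t + y * br x t)
    (hone : ∀ x : A, br x 1 = 0) (X Z : A ⊗[k] A →ₗ[k] A ⊗[k] A)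
    (hX : ∀ x y : A, X (x ⊗ₜ[k] y) = (1 : A) ⊗ₜ[k] br x y + x ⊗ₜ[k] y)
    (hZ : ∀ x y : A, Z (x ⊗ₜ[k] y) =
      (1 : A) ⊗ₜ[k] (x * y) + (x * y) ⊗ₜ[k] (1 : A) - y ⊗ₜ[k] x) :
    ybComm X X Z = 0 := by
  refine ybComm_eq_zero_of_tmul _ _ _ fun x y z => ?_
  simp only [leg12_tmul, leg13_tmul, leg23_tmul, hX, hZ, map_add, map_sub, tmul_add, tmul_sub,
    add_tmul, assoc_tmul, lTensor_tmul, LinearEquiv.coe_coe, comm_tmul, hone,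
    br_one_left hanti hone, hleibniz, tmul_zero, zero_add]
  abel

end PoissonBracket

theorem wxz_system_from_poisson_algebra
    (A : Type*) [Ring A] [Algebra k A]
    (br : A →ₗ[k] A →ₗ[k] A)
    (hanti : ∀ x y : A, br x y = -br y x)
    (hjacobi : ∀ x y t : A, br x (br y t) + br y (br t x) + br t (br x y) = 0)
    (hleibniz : ∀ x y t : A, br x (y * t) = br x y * t + y * br x t)
    (hone : ∀ x : A, br x 1 = 0)
    (W X Z : A ⊗[k] A →ₗ[k] A ⊗[k] A)
    (hW : ∀ x y : A, W (x ⊗ₜ[k] y) = br x y ⊗ₜ[k] (1 : A) + x ⊗ₜ[k] y)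
    (hX : ∀ x y : A, X (x ⊗ₜ[k] y) = (1 : A) ⊗ₜ[k] br x y + x ⊗ₜ[k] y)
    (hZ : ∀ x y : A, Z (x ⊗ₜ[k] y) =
      (1 : A) ⊗ₜ[k] (x * y) + (x * y) ⊗ₜ[k] (1 : A) - y ⊗ₜ[k] x) :
    ybComm W W W = 0 ∧ ybComm Z Z Z = 0 ∧ ybComm W X X = 0 ∧ ybComm X X Z = 0 :=
  ⟨ybComm_WWW_eq_zero hanti hjacobi hone W hW, ybComm_ZZZ_eq_zero Z hZ,
    ybComm_WXX_eq_zero hanti hjacobi hone W X hW hX, ybComm_XXZ_eq_zero hanti hleibniz hone X Z hX hZ⟩
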